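/- In the LIiP-style modal system, the conditional functionality law is derivable: ⊢ (¬¬φ → ψ) → (◇φ → □ψ), where ◇φ := ¬¬(k ∧ φ); consequently, if ¬¬φ → φ is a theorem (local classicality of φ), then ⊢ ◇φ ↔ □φ. -/
import Mathlib


/-- Propositional modal formulas over atoms, with a unary modality `box`. -/
inductive Form : Type where
  | atom : Nat → Form
  | bot  : Form
  | and  : Form → Form → Form
  | or   : Form → Form → Form
  | imp  : Form → Form → Form
  | box  : Form → Form
deriving DecidableEq

/-- Intuitionistic negation. -/
def Form.neg (a : Form) : Form := a.imp .bot
/-- Biconditional. -/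
def Form.iff (a b : Form) : Form := (a.imp b).and (b.imp a)

/-- A standard Hilbert system for intuitionistic propositional logic
(box-formulas are treated as opaque). -/
inductive IPL : Form → Prop where
  | ax1 (a b : Form) : IPL (a.imp (b.imp a))
  | ax2 (a b c : Form) : IPL ((a.imp (b.imp c)).imp ((a.imp b).imp (a.imp c)))
  | andI (a b : Form) : IPL (a.imp (b.imp (a.and b)))
  | andE1 (a b : Form) : IPL ((a.and b).imp a)
  | andE2 (a b : Form) : IPL ((a.and b).imp b)
  | orI1 (a b : Form) : IPL (a.imp (a.or b))
  | orI2 (a b : Form) : IPL (b.imp (a.or b))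
  | orE (a b c : Form) : IPL ((a.imp c).imp ((b.imp c).imp ((a.or b).imp c)))
  | exfalso (a : Form) : IPL (Form.bot.imp a)
  | mp {a b : Form} : IPL (a.imp b) → IPL a → IPL b

/-- `◇φ := ¬¬(k ∧ φ)`. -/
def Form.dia (k φ : Form) : Form := ((k.and φ).neg.neg)

namespace IPLAux

/-- IPL with hypotheses. -/
inductive IPLh : (Form → Prop) → Form → Prop where
  | hyp {G a} : G a → IPLh G a
  | ax1 (G) (a b : Form) : IPLh G (a.imp (b.imp a))
  | ax2 (G) (a b c : Form) : IPLh G ((a.imp (b.imp c)).imp ((a.imp b).imp (a.imp c)))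
  | andI (G) (a b : Form) : IPLh G (a.imp (b.imp (a.and b)))
  | andE1 (G) (a b : Form) : IPLh G ((a.and b).imp a)
  | andE2 (G) (a b : Form) : IPLh G ((a.and b).imp b)
  | orI1 (G) (a b : Form) : IPLh G (a.imp (a.or b))
  | orI2 (G) (a b : Form) : IPLh G (b.imp (a.or b))
  | orE (G) (a b c : Form) : IPLh G ((a.imp c).imp ((b.imp c).imp ((a.or b).imp c)))
  | exfalso (G) (a : Form) : IPLh G (Form.bot.imp a)
  | mp {G} {a b : Form} : IPLh G (a.imp b) → IPLh G a → IPLh G b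

theorem IPLh.selfImp (G) (a : Form) : IPLh G (a.imp a) :=
  .mp (.mp (.ax2 G a (a.imp a) a) (.ax1 G a (a.imp a))) (.ax1 G a a)

theorem IPLh.weak1 {G : Form → Prop} {a b : Form} (h : IPLh G b) : IPLh G (a.imp b) :=
  .mp (.ax1 G b a) h

theorem deduction {G : Form → Prop} {a b : Form}
    (h : IPLh (fun x => x = a ∨ G x) b) : IPLh G (a.imp b) := by
  induction h with
  | hyp m =>
    rcases m with rfl | m
    · exact IPLh.selfImp _ _
    · exact IPLh.weak1 (.hyp m)
  | mp _ _ ih1 ih2 => exact .mp (.mp (.ax2 G a _ _) ih1) ih2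
  | ax1 => exact IPLh.weak1 (.ax1 G _ _)
  | ax2 => exact IPLh.weak1 (.ax2 G _ _ _)
  | andI => exact IPLh.weak1 (.andI G _ _)
  | andE1 => exact IPLh.weak1 (.andE1 G _ _)
  | andE2 => exact IPLh.weak1 (.andE2 G _ _)
  | orI1 => exact IPLh.weak1 (.orI1 G _ _)
  | orI2 => exact IPLh.weak1 (.orI2 G _ _)
  | orE => exact IPLh.weak1 (.orE G _ _ _)
  | exfalso => exact IPLh.weak1 (.exfalso G _)

theorem toIPL {a : Form} (h : IPLh (fun _ => False) a) : IPL a := by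
  induction h with
  | hyp m => exact m.elim
  | mp _ _ ih1 ih2 => exact .mp ih1 ih2
  | ax1 => exact .ax1 _ _
  | ax2 => exact .ax2 _ _ _
  | andI => exact .andI _ _
  | andE1 => exact .andE1 _ _
  | andE2 => exact .andE2 _ _
  | orI1 => exact .orI1 _ _
  | orI2 => exact .orI2 _ _
  | orE => exact .orE _ _ _
  | exfalso => exact .exfalso _

/-- `⊢ ¬¬(k ∧ φ) → ¬¬φ` (EWDN). -/
theorem ewdn (k φ : Form) : IPL (((k.and φ).neg.neg).imp φ.neg.neg) := by
  apply toIPL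
  apply deduction
  apply deduction
  -- hyps: φ.neg, ¬¬(k∧φ); goal ⊥
  apply IPLh.mp (IPLh.hyp (Or.inr (Or.inl rfl)))
  -- goal : (k∧φ).neg = (k∧φ).imp ⊥
  apply deduction
  exact IPLh.mp (IPLh.hyp (Or.inr (Or.inl rfl)))
    (IPLh.mp (IPLh.andE2 _ k φ) (IPLh.hyp (Or.inl rfl)))

/-- `⊢ (d → n) → ((p → b) → ((n → p) → (d → b)))`. -/
theorem chain3 (d n p b : Form) :
    IPL ((d.imp n).imp ((p.imp b).imp ((n.imp p).imp (d.imp b)))) := by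
  apply toIPL
  apply deduction; apply deduction; apply deduction; apply deduction
  exact IPLh.mp (IPLh.hyp (Or.inr (Or.inr (Or.inl rfl))))
    (IPLh.mp (IPLh.hyp (Or.inr (Or.inl rfl)))
      (IPLh.mp (IPLh.hyp (Or.inr (Or.inr (Or.inr (Or.inl rfl))))) (IPLh.hyp (Or.inl rfl))))

end IPLAux

/-- Conditional functionality `⊢ (¬¬φ → ψ) → (◇φ → □ψ)`; consequently, if
`¬¬φ → φ` is a theorem then `⊢ ◇φ ↔ □φ`. -/

theorem cf_and_lcime
    (Prv : Form → Prop) (k : Form)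
    (hIPL : ∀ φ : Form, IPL φ → Prv φ)
    (hMP : ∀ φ ψ : Form, Prv (φ.imp ψ) → Prv φ → Prv ψ)
    (hK : ∀ φ ψ : Form, Prv (((φ.imp ψ).box).imp ((φ.box).imp ψ.box)))
    (hET : ∀ φ : Form, Prv ((φ.box).imp (k.imp φ)))
    (hSelf : Prv k.box)
    (hID : ∀ φ : Form, Prv ((φ.box).imp ((k.and φ).neg.neg)))
    (hMM : ∀ φ : Form, Prv (φ.imp φ.box)) :
    (∀ φ ψ : Form, Prv (((φ.neg.neg).imp ψ).imp ((Form.dia k φ).imp ψ.box))) ∧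
    (∀ φ : Form, Prv ((φ.neg.neg).imp φ) → Prv (Form.iff (Form.dia k φ) φ.box)) := by
  have cf : ∀ φ ψ : Form, Prv (((φ.neg.neg).imp ψ).imp ((Form.dia k φ).imp ψ.box)) := by
    intro φ ψ
    have h1 : Prv (((Form.dia k φ).imp φ.neg.neg).imp ((ψ.imp ψ.box).imp
        (((φ.neg.neg).imp ψ).imp ((Form.dia k φ).imp ψ.box)))) :=
      hIPL _ (IPLAux.chain3 (Form.dia k φ) φ.neg.neg ψ ψ.box)
    exact hMP _ _ (hMP _ _ h1 (hIPL _ (IPLAux.ewdn k φ))) (hMM ψ)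
  refine ⟨cf, ?_⟩
  intro φ h
  have fwd : Prv ((Form.dia k φ).imp φ.box) := hMP _ _ (cf φ φ) h
  have bwd : Prv ((φ.box).imp (Form.dia k φ)) := hID φ
  exact hMP _ _ (hMP _ _ (hIPL _ (IPL.andI _ _)) fwd) bwd
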